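/- arXiv:1310.4785 — 2 statements merged into one kernel-verified Lean document; each statement's English description precedes it below -/
import Mathlib

section
/- The function φ₀ of the quadrilateral Lin–Tobiska–Zhou (QLTZ) element is dual to the cell-average degree of freedom: ⨍_Q φ₀ = 1 and ⨍_{eᵢ} φ₀ = 0 for each edge i = 1, 2, 3, 4, i.e. d₀(φ₀) = 1 and dᵢ(φ₀) = 0 for i = 1,…,4. -/
open MeasureTheory

noncomputable section

/-- Vertex a₁ of the reference convex quadrilateral (points written as (η, ξ)). -/
def a1 (α β : ℝ) : ℝ × ℝ := (-1 - α, 1 - β)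

/-- Vertex a₂. -/
def a2 (α β : ℝ) : ℝ × ℝ := (-1 + α, -1 + β)

/-- Vertex a₃. -/
def a3 (α β : ℝ) : ℝ × ℝ := (1 - α, -1 - β)

/-- Vertex a₄. -/
def a4 (α β : ℝ) : ℝ × ℝ := (1 + α, 1 + β)

/-- The reference convex quadrilateral Q = conv{a₁, a₂, a₃, a₄}. -/
def Quad (α β : ℝ) : Set (ℝ × ℝ) :=
  convexHull ℝ {a1 α β, a2 α β, a3 α β, a4 α β}

/-- Average of `u` over the segment from `P` to `R`:
    ⨍ u = ∫_{t ∈ [0,1]} u((1−t)P + tR) dt. -/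
def edgeAvg (P R : ℝ × ℝ) (u : ℝ × ℝ → ℝ) : ℝ :=
  ∫ t in (0:ℝ)..1, u ((1 - t) • P + t • R)

/-- Average of `u` over the quadrilateral Q: (∫_Q u dλ)/λ(Q). -/
def quadAvg (α β : ℝ) (u : ℝ × ℝ → ℝ) : ℝ :=
  (∫ p in Quad α β, u p) / (volume (Quad α β)).toReal

/-- The basis function φ₀ of the QLTZ element:
φ₀ = −3(3ξ² + 3η² − 2αξ − 2βη − (4 + α² + β²))/(2(α² + β² + 3)),
with ξ(p) = p.2 and η(p) = p.1. -/
def phi0 (α β : ℝ) (p : ℝ × ℝ) : ℝ :=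
  -3 * (3 * p.2 ^ 2 + 3 * p.1 ^ 2 - 2 * α * p.2 - 2 * β * p.1 - (4 + α ^ 2 + β ^ 2)) /
    (2 * (α ^ 2 + β ^ 2 + 3))

/-- φ₁ = −(3/4)ξ² + ((β−1)/2)η + (3+β²)/4 − ((β²−β+3)/6)φ₀. -/
def phi1 (α β : ℝ) (p : ℝ × ℝ) : ℝ :=
  -(3 / 4) * p.2 ^ 2 + (β - 1) / 2 * p.1 + (3 + β ^ 2) / 4 -
    (β ^ 2 - β + 3) / 6 * phi0 α β p

/-- φ₂ = −(3/4)η² + ((α−1)/2)ξ + (3+α²)/4 − ((α²−α+3)/6)φ₀. -/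
def phi2 (α β : ℝ) (p : ℝ × ℝ) : ℝ :=
  -(3 / 4) * p.1 ^ 2 + (α - 1) / 2 * p.2 + (3 + α ^ 2) / 4 -
    (α ^ 2 - α + 3) / 6 * phi0 α β p

/-- φ₃ = −(3/4)ξ² + ((β+1)/2)η + (3+β²)/4 − ((β²+β+3)/6)φ₀. -/
def phi3 (α β : ℝ) (p : ℝ × ℝ) : ℝ :=
  -(3 / 4) * p.2 ^ 2 + (β + 1) / 2 * p.1 + (3 + β ^ 2) / 4 -
    (β ^ 2 + β + 3) / 6 * phi0 α β p

/-- φ₄ = −(3/4)η² + ((α+1)/2)ξ + (3+α²)/4 − ((α²+α+3)/6)φ₀. -/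
def phi4 (α β : ℝ) (p : ℝ × ℝ) : ℝ :=
  -(3 / 4) * p.1 ^ 2 + (α + 1) / 2 * p.2 + (3 + α ^ 2) / 4 -
    (α ^ 2 + α + 3) / 6 * phi0 α β p

/-!
φ₀ is a quadratic polynomial, and averages of quadratics are computed exactly by two quadrature
rules: Simpson's rule on each edge, and on a triangle T the rule
`∫_T q = |T| · (mean of q over the three edge midpoints)`, obtained by an affine change of
variables from the standard triangle. The diagonal a₁a₃ cuts Q into two triangles of areas
2(1 - α - β) and 2(1 + α + β), so |Q| = 4 and every degree of freedom of φ₀ reduces to evaluating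
φ₀ at a handful of points.
-/

open Set

section Convex

variable {E : Type*} [AddCommGroup E] [Module ℝ E]

theorem convexHull_range_eq_image_stdSimplex {ι : Type*} [Fintype ι] (v : ι → E) :
    convexHull ℝ (range v) = Fintype.linearCombination ℝ v '' stdSimplex ℝ ι := by
  classical
  have hv : Fintype.linearCombination ℝ v ∘ (fun i => Pi.single i 1) = v :=
    funext fun i => by simp [Fintype.linearCombination_apply_single]
  rw [← convexHull_rangle_single_eq_stdSimplex, LinearMap.image_convexHull, ← range_comp, hv]

theorem add_smul_mem_convexHull_triple {a b c : E} {w₀ w₁ w₂ : ℝ} (h₀ : 0 ≤ w₀) (h₁ : 0 ≤ w₁)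
    (h₂ : 0 ≤ w₂) (hw : w₀ + w₁ + w₂ = 1) : w₀ • a + w₁ • b + w₂ • c ∈ convexHull ℝ {a, b, c} := by
  refine mem_convexHull_of_exists_fintype ![w₀, w₁, w₂] ![a, b, c] (fun i => ?_) ?_ (fun i => ?_) ?_
  · fin_cases i
    exacts [h₀, h₁, h₂]
  · simpa [Fin.sum_univ_three] using hw
  · fin_cases i <;> simp
  · simp [Fin.sum_univ_three, add_assoc]

def stdTriangle : Set (ℝ × ℝ) := {p | 0 ≤ p.1 ∧ 0 ≤ p.2 ∧ p.1 + p.2 ≤ 1}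

theorem convexHull_triple_eq_image (A B C : E) :
    convexHull ℝ {A, B, C} =
      (fun p : ℝ × ℝ => A + p.1 • (B - A) + p.2 • (C - A)) '' stdTriangle := by
  apply Subset.antisymm
  · rw [show ({A, B, C} : Set E) = range ![A, B, C] by
      rw [Matrix.range_cons, Matrix.range_cons_cons_empty, singleton_union],
      convexHull_range_eq_image_stdSimplex]
    rintro _ ⟨w, ⟨hw₀, hw₁⟩, rfl⟩
    rw [Fin.sum_univ_three] at hw₁
    refine ⟨(w 1, w 2), ⟨hw₀ 1, hw₀ 2, by linarith [hw₀ 0]⟩, ?_⟩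
    have hw : w 0 = 1 - w 1 - w 2 := by linarith
    simp only [Fintype.linearCombination_apply, Fin.sum_univ_three, Matrix.cons_val_zero,
      Matrix.cons_val_one, Matrix.cons_val, hw]
    module
  · rintro _ ⟨p, ⟨h₁, h₂, h₃⟩, rfl⟩
    convert add_smul_mem_convexHull_triple (a := A) (b := B) (c := C)
      (by linarith : 0 ≤ 1 - p.1 - p.2) h₁ h₂ (by ring) using 1
    module

theorem add_smul_mem_convexHull_triple_of_le {a b c d : E} {μ ν μ' ν' w₀ w₁ w₂ w₃ : ℝ}
    (hν : 0 < ν) (hμ' : 0 ≤ μ') (hν' : 0 ≤ ν') (hμν : μ + ν = 1) (hμν' : μ' + ν' = 1)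
    (h : μ • b + ν • d = μ' • a + ν' • c) (h₀ : 0 ≤ w₀) (h₂ : 0 ≤ w₂) (h₃ : 0 ≤ w₃)
    (hw : w₀ + w₁ + w₂ + w₃ = 1) (hle : w₃ * μ ≤ w₁ * ν) :
    w₀ • a + w₁ • b + w₂ • c + w₃ • d ∈ convexHull ℝ {a, b, c} := by
  -- `h` says that the diagonals `[a, c]` and `[b, d]` meet; solving it for `d` leaves weights on
  -- `a, b, c` that are nonnegative exactly when `hle` holds.
  have hd : w₃ • d = (w₃ / ν) • (μ' • a + ν' • c - μ • b) := by
    rw [← h, add_sub_cancel_left, smul_smul, div_mul_cancel₀ _ hν.ne']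
  have hb : w₃ / ν * μ ≤ w₁ := by rw [div_mul_eq_mul_div, div_le_iff₀ hν]; exact hle
  have hsum : w₃ / ν * (μ' - μ + ν') = w₃ := by
    rw [show μ' - μ + ν' = ν by linarith, div_mul_cancel₀ _ hν.ne']
  convert add_smul_mem_convexHull_triple (a := a) (b := b) (c := c)
    (by positivity : 0 ≤ w₀ + w₃ / ν * μ') (sub_nonneg.2 hb) (by positivity : 0 ≤ w₂ + w₃ / ν * ν')
    (by linear_combination hw + hsum) using 1
  rw [add_assoc _ _ (w₃ • d), hd]
  module

theorem convexHull_quadrilateral_eq_union {a b c d m : E} (hac : m ∈ segment ℝ a c)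
    (hbd : m ∈ openSegment ℝ b d) :
    convexHull ℝ {a, b, c, d} = convexHull ℝ {a, b, c} ∪ convexHull ℝ {a, c, d} := by
  refine Subset.antisymm ?_ (union_subset (convexHull_mono (by grind)) (convexHull_mono (by grind)))
  obtain ⟨μ', ν', hμ', hν', hμν', rfl⟩ := hac
  obtain ⟨μ, ν, hμ, hν, hμν, h⟩ := hbd
  rw [show ({a, b, c, d} : Set E) = range ![a, b, c, d] by
      rw [Matrix.range_cons, Matrix.range_cons, Matrix.range_cons_cons_empty]
      simp only [singleton_union],
    convexHull_range_eq_image_stdSimplex]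
  rintro _ ⟨w, ⟨hw₀, hw₁⟩, rfl⟩
  simp only [Fin.sum_univ_four] at hw₁
  simp only [Fintype.linearCombination_apply, Fin.sum_univ_four, Matrix.cons_val_zero,
    Matrix.cons_val_one, Matrix.cons_val, mem_union]
  rcases le_total (w 3 * μ) (w 1 * ν) with hle | hle
  · exact Or.inl (add_smul_mem_convexHull_triple_of_le hν hμ' hν' hμν hμν' h
      (hw₀ 0) (hw₀ 2) (hw₀ 3) hw₁ hle)
  · right
    rw [pair_comm c d]
    convert add_smul_mem_convexHull_triple_of_le hμ hμ' hν' (by linarith) hμν'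
      ((add_comm _ _).trans h) (hw₀ 0) (hw₀ 2) (hw₀ 1) (by linarith) (by linarith) using 1
    abel

end Convex

theorem measurableSet_stdTriangle : MeasurableSet stdTriangle :=
  (measurableSet_le measurable_const measurable_fst).inter
    ((measurableSet_le measurable_const measurable_snd).inter
      (measurableSet_le (measurable_fst.add measurable_snd) measurable_const))

theorem isCompact_stdTriangle : IsCompact stdTriangle := by
  refine ((isCompact_Icc (a := (0 : ℝ)) (b := 1)).prod
    (isCompact_Icc (a := (0 : ℝ)) (b := 1))).of_isClosed_subset ?_
    fun p ⟨h₁, h₂, h₃⟩ => ⟨⟨h₁, by linarith⟩, ⟨h₂, by linarith⟩⟩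
  exact (isClosed_le continuous_const continuous_fst).inter
      ((isClosed_le continuous_const continuous_snd).inter
        (isClosed_le (continuous_fst.add continuous_snd) continuous_const))

theorem indicator_stdTriangle (g : ℝ × ℝ → ℝ) (x y : ℝ) :
    stdTriangle.indicator g (x, y) =
      (Icc 0 1).indicator (fun x => (Icc 0 (1 - x)).indicator (fun y => g (x, y)) y) x := by
  simp only [indicator_apply, stdTriangle, mem_ofPred_eq, mem_Icc]
  split_ifs <;> grind

theorem setIntegral_stdTriangle_eq_iteratedIntegral {g : ℝ × ℝ → ℝ} (hg : Continuous g) :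
    ∫ p in stdTriangle, g p = ∫ x in (0 : ℝ)..1, ∫ y in (0 : ℝ)..(1 - x), g (x, y) := by
  have hint : Integrable (stdTriangle.indicator g) (volume.prod volume) :=
    (integrable_indicator_iff measurableSet_stdTriangle).2
      (hg.continuousOn.integrableOn_compact isCompact_stdTriangle)
  have hslice (x : ℝ) : ∫ y, stdTriangle.indicator g (x, y) =
      (Icc 0 1).indicator (fun x => ∫ y in Icc 0 (1 - x), g (x, y)) x := by
    by_cases hx : x ∈ Icc (0 : ℝ) 1
    · simp only [indicator_stdTriangle, indicator_of_mem hx, integral_indicator measurableSet_Icc]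
    · simp [indicator_stdTriangle, indicator_of_notMem hx]
  rw [← integral_indicator measurableSet_stdTriangle, Measure.volume_eq_prod, integral_prod _ hint]
  simp_rw [hslice]
  rw [integral_indicator measurableSet_Icc, intervalIntegral.integral_of_le zero_le_one,
    integral_Icc_eq_integral_Ioc]
  refine setIntegral_congr_fun measurableSet_Ioc fun x hx => ?_
  rw [intervalIntegral.integral_of_le (by linarith [hx.2]), integral_Icc_eq_integral_Ioc]

open ContinuousLinearMap in
theorem det_coprod_toSpanSingleton (U V : ℝ × ℝ) :
    ((toSpanSingleton ℝ U).coprod (toSpanSingleton ℝ V)).det = U.1 * V.2 - U.2 * V.1 := by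
  rw [ContinuousLinearMap.det, ← LinearMap.det_toMatrix (Module.Basis.finTwoProd ℝ),
    Matrix.det_fin_two]
  simp [LinearMap.toMatrix_apply, mul_comm]

open ContinuousLinearMap in
theorem setIntegral_convexHull_triple_eq_abs_det_mul (A B C : ℝ × ℝ)
    (hd : (B - A).1 * (C - A).2 - (B - A).2 * (C - A).1 ≠ 0) (g : ℝ × ℝ → ℝ) :
    ∫ p in convexHull ℝ {A, B, C}, g p =
      |(B - A).1 * (C - A).2 - (B - A).2 * (C - A).1| *
        ∫ p in stdTriangle, g (A + p.1 • (B - A) + p.2 • (C - A)) := by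
  set L := (toSpanSingleton ℝ (B - A)).coprod (toSpanSingleton ℝ (C - A))
  have hL (p : ℝ × ℝ) : A + p.1 • (B - A) + p.2 • (C - A) = A + L p := by
    simp [L, add_assoc]
  have hinj : Function.Injective L :=
    ((Module.End.isUnit_iff _).1 ((LinearMap.isUnit_iff_isUnit_det _).2
      (by rw [← ContinuousLinearMap.det, det_coprod_toSpanSingleton]; exact hd.isUnit))).1
  simp only [convexHull_triple_eq_image, hL]
  rw [integral_image_eq_integral_abs_det_fderiv_smul volume
    measurableSet_stdTriangle (fun p _ => (L.hasFDerivAt.const_add A).hasFDerivWithinAt)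
    ((add_right_injective A).comp hinj).injOn, det_coprod_toSpanSingleton, integral_smul,
    smul_eq_mul]

theorem integral_cubic (b c₀ c₁ c₂ c₃ : ℝ) :
    ∫ x in (0 : ℝ)..b, (c₀ + c₁ * x + c₂ * x ^ 2 + c₃ * x ^ 3) =
      c₀ * b + c₁ * b ^ 2 / 2 + c₂ * b ^ 3 / 3 + c₃ * b ^ 4 / 4 := by
  have hi : ∀ f : ℝ → ℝ, Continuous f → IntervalIntegrable f volume 0 b :=
    fun f hf => hf.intervalIntegrable _ _
  rw [intervalIntegral.integral_add (hi _ (by fun_prop)) (hi _ (by fun_prop)),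
    intervalIntegral.integral_add (hi _ (by fun_prop)) (hi _ (by fun_prop)),
    intervalIntegral.integral_add (hi _ (by fun_prop)) (hi _ (by fun_prop)),
    intervalIntegral.integral_const_mul, intervalIntegral.integral_const_mul,
    intervalIntegral.integral_const_mul]
  simp only [intervalIntegral.integral_const, integral_id, integral_pow, smul_eq_mul]
  ring

theorem integral_zero_one_eq_simpson_of_cubic {f : ℝ → ℝ} {c₀ c₁ c₂ c₃ : ℝ}
    (hf : ∀ t, f t = c₀ + c₁ * t + c₂ * t ^ 2 + c₃ * t ^ 3) :
    ∫ t in (0 : ℝ)..1, f t = (f 0 + 4 * f (1 / 2) + f 1) / 6 := by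
  simp only [hf, integral_cubic]
  ring

def IsQuadratic (q : ℝ × ℝ → ℝ) : Prop :=
  ∃ c₀ c₁ c₂ c₁₁ c₁₂ c₂₂ : ℝ, ∀ p : ℝ × ℝ,
    q p = c₀ + c₁ * p.1 + c₂ * p.2 + c₁₁ * p.1 ^ 2 + c₁₂ * p.1 * p.2 + c₂₂ * p.2 ^ 2

namespace IsQuadratic

variable {q : ℝ × ℝ → ℝ}

theorem continuous (hq : IsQuadratic q) : Continuous q := by
  obtain ⟨c₀, c₁, c₂, c₁₁, c₁₂, c₂₂, hq⟩ := hq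
  rw [funext hq]
  fun_prop

theorem comp_affine (hq : IsQuadratic q) (P U V : ℝ × ℝ) :
    IsQuadratic fun p => q (P + p.1 • U + p.2 • V) := by
  obtain ⟨c₀, c₁, c₂, c₁₁, c₁₂, c₂₂, hq⟩ := hq
  refine ⟨q P, c₁ * U.1 + c₂ * U.2 + 2 * c₁₁ * P.1 * U.1 + c₁₂ * (P.1 * U.2 + P.2 * U.1)
      + 2 * c₂₂ * P.2 * U.2,
    c₁ * V.1 + c₂ * V.2 + 2 * c₁₁ * P.1 * V.1 + c₁₂ * (P.1 * V.2 + P.2 * V.1)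
      + 2 * c₂₂ * P.2 * V.2,
    c₁₁ * U.1 ^ 2 + c₁₂ * U.1 * U.2 + c₂₂ * U.2 ^ 2,
    2 * c₁₁ * U.1 * V.1 + c₁₂ * (U.1 * V.2 + U.2 * V.1) + 2 * c₂₂ * U.2 * V.2,
    c₁₁ * V.1 ^ 2 + c₁₂ * V.1 * V.2 + c₂₂ * V.2 ^ 2, fun p => ?_⟩
  simp only [hq, Prod.fst_add, Prod.snd_add, Prod.smul_fst, Prod.smul_snd, smul_eq_mul]
  ring

theorem edgeAvg_eq (hq : IsQuadratic q) (P R : ℝ × ℝ) :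
    edgeAvg P R q = (q P + 4 * q (midpoint ℝ P R) + q R) / 6 := by
  obtain ⟨c₀, c₁, c₂, c₁₁, c₁₂, c₂₂, hc⟩ := hq.comp_affine P (R - P) 0
  have hline (t : ℝ) : q ((1 - t) • P + t • R) = c₀ + c₁ * t + c₁₁ * t ^ 2 + 0 * t ^ 3 := by
    have := hc (t, 0)
    simp only [smul_zero, add_zero] at this
    rw [show (1 - t) • P + t • R = P + t • (R - P) by module, this]
    ring
  rw [edgeAvg, integral_zero_one_eq_simpson_of_cubic hline, midpoint_eq_smul_add]
  norm_num

theorem setIntegral_stdTriangle (hq : IsQuadratic q) :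
    ∫ p in stdTriangle, q p = (q (1 / 2, 0) + q (1 / 2, 1 / 2) + q (0, 1 / 2)) / 6 := by
  rw [setIntegral_stdTriangle_eq_iteratedIntegral hq.continuous]
  obtain ⟨c₀, c₁, c₂, c₁₁, c₁₂, c₂₂, hq⟩ := hq
  have hinner (x : ℝ) : ∫ y in (0 : ℝ)..(1 - x), q (x, y) =
      (c₀ + c₂ / 2 + c₂₂ / 3) + (c₁ - c₀ + c₁₂ / 2 - c₂ - c₂₂) * x
        + (c₁₁ - c₁ + c₂ / 2 - c₁₂ + c₂₂) * x ^ 2 + (c₁₂ / 2 - c₁₁ - c₂₂ / 3) * x ^ 3 := by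
    calc ∫ y in (0 : ℝ)..(1 - x), q (x, y)
        = ∫ y in (0 : ℝ)..(1 - x),
            ((c₀ + c₁ * x + c₁₁ * x ^ 2) + (c₂ + c₁₂ * x) * y + c₂₂ * y ^ 2 + 0 * y ^ 3) := by
          congr 1; funext y; rw [hq]; ring
      _ = _ := by rw [integral_cubic]; ring
  rw [intervalIntegral.integral_congr fun x _ => hinner x, integral_cubic]
  simp only [hq]
  ring

theorem setIntegral_convexHull_triple (hq : IsQuadratic q) (A B C : ℝ × ℝ)
    (hd : (B - A).1 * (C - A).2 - (B - A).2 * (C - A).1 ≠ 0) :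
    ∫ p in convexHull ℝ {A, B, C}, q p =
      |(B - A).1 * (C - A).2 - (B - A).2 * (C - A).1| / 6 *
        (q (midpoint ℝ A B) + q (midpoint ℝ B C) + q (midpoint ℝ A C)) := by
  rw [setIntegral_convexHull_triple_eq_abs_det_mul A B C hd,
    (hq.comp_affine _ _ _).setIntegral_stdTriangle]
  have hAB : A + (1 / 2 : ℝ) • (B - A) + (0 : ℝ) • (C - A) = midpoint ℝ A B := by
    rw [midpoint_eq_smul_add, invOf_eq_inv]; module
  have hBC : A + (1 / 2 : ℝ) • (B - A) + (1 / 2 : ℝ) • (C - A) = midpoint ℝ B C := by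
    rw [midpoint_eq_smul_add, invOf_eq_inv]; module
  have hAC : A + (0 : ℝ) • (B - A) + (1 / 2 : ℝ) • (C - A) = midpoint ℝ A C := by
    rw [midpoint_eq_smul_add, invOf_eq_inv]; module
  simp only [hAB, hBC, hAC]
  ring

end IsQuadratic

theorem volume_setOf_fst_add_snd_eq (c : ℝ) : volume {p : ℝ × ℝ | p.1 + p.2 = c} = 0 := by
  have hm : MeasurableSet {p : ℝ × ℝ | p.1 + p.2 = c} :=
    measurableSet_eq_fun (by fun_prop) measurable_const
  rw [Measure.volume_eq_prod, Measure.measure_prod_null hm]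
  refine Filter.Eventually.of_forall fun x => ?_
  have : Prod.mk x ⁻¹' {p : ℝ × ℝ | p.1 + p.2 = c} = {c - x} := by
    ext y; simp [eq_sub_iff_add_eq']
  simp [this]

variable {α β : ℝ}

theorem quad_eq_union_triangles (hα : 0 < α) (hβ : 0 < β) (hαβ : α + β < 1) :
    Quad α β = convexHull ℝ {a1 α β, a2 α β, a3 α β} ∪ convexHull ℝ {a1 α β, a3 α β, a4 α β} :=
  convexHull_quadrilateral_eq_union (m := (-β, -α))
    ⟨(1 - α + β) / 2, (1 + α - β) / 2, by linarith, by linarith, by ring,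
      by ext <;> simp only [a1, a3, Prod.smul_mk, Prod.mk_add_mk, smul_eq_mul] <;> ring⟩
    ⟨(1 + α + β) / 2, (1 - α - β) / 2, by linarith, by linarith, by ring,
      by ext <;> simp only [a2, a4, Prod.smul_mk, Prod.mk_add_mk, smul_eq_mul] <;> ring⟩

theorem aedisjoint_quad_triangles (hα : 0 < α) (hβ : 0 < β) (hαβ : α + β < 1) :
    AEDisjoint volume (convexHull ℝ {a1 α β, a2 α β, a3 α β})
      (convexHull ℝ {a1 α β, a3 α β, a4 α β}) := by
  have hℓ := (LinearMap.fst ℝ ℝ ℝ + LinearMap.snd ℝ ℝ ℝ).isLinear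
  have h₁ : convexHull ℝ {a1 α β, a2 α β, a3 α β} ⊆ {p | p.1 + p.2 ≤ -(α + β)} :=
    convexHull_min
      (by rintro _ (rfl | rfl | rfl) <;> simp only [a1, a2, a3, mem_ofPred_eq] <;> linarith)
      (convex_halfSpace_le hℓ _)
  have h₂ : convexHull ℝ {a1 α β, a3 α β, a4 α β} ⊆ {p | -(α + β) ≤ p.1 + p.2} :=
    convexHull_min
      (by rintro _ (rfl | rfl | rfl) <;> simp only [a1, a3, a4, mem_ofPred_eq] <;> linarith)
      (convex_halfSpace_ge hℓ _)
  exact measure_mono_null (fun p hp => le_antisymm (h₁ hp.1) (h₂ hp.2))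
    (volume_setOf_fst_add_snd_eq _)

theorem IsQuadratic.setIntegral_quad {q : ℝ × ℝ → ℝ} (hq : IsQuadratic q)
    (hα : 0 < α) (hβ : 0 < β) (hαβ : α + β < 1) :
    ∫ p in Quad α β, q p =
      2 * (1 - α - β) / 3 * (q (midpoint ℝ (a1 α β) (a2 α β)) +
        q (midpoint ℝ (a2 α β) (a3 α β)) + q (midpoint ℝ (a1 α β) (a3 α β))) +
      2 * (1 + α + β) / 3 * (q (midpoint ℝ (a1 α β) (a3 α β)) +
        q (midpoint ℝ (a3 α β) (a4 α β)) + q (midpoint ℝ (a1 α β) (a4 α β))) := by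
  have hd₁ : (a2 α β - a1 α β).1 * (a3 α β - a1 α β).2 - (a2 α β - a1 α β).2 * (a3 α β - a1 α β).1
      = 4 * (1 - α - β) := by simp only [a1, a2, a3, Prod.mk_sub_mk]; ring
  have hd₂ : (a3 α β - a1 α β).1 * (a4 α β - a1 α β).2 - (a3 α β - a1 α β).2 * (a4 α β - a1 α β).1
      = 4 * (1 + α + β) := by simp only [a1, a3, a4, Prod.mk_sub_mk]; ring
  have hT₁ : IsCompact (convexHull ℝ {a1 α β, a2 α β, a3 α β}) :=
    (toFinite _).isCompact_convexHull (𝕜 := ℝ)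
  have hT₂ : IsCompact (convexHull ℝ {a1 α β, a3 α β, a4 α β}) :=
    (toFinite _).isCompact_convexHull (𝕜 := ℝ)
  rw [quad_eq_union_triangles hα hβ hαβ, setIntegral_union₀ (aedisjoint_quad_triangles hα hβ hαβ)
    hT₂.measurableSet.nullMeasurableSet
    (hq.continuous.continuousOn.integrableOn_compact hT₁)
    (hq.continuous.continuousOn.integrableOn_compact hT₂),
    hq.setIntegral_convexHull_triple _ _ _ (by rw [hd₁]; linarith),
    hq.setIntegral_convexHull_triple _ _ _ (by rw [hd₂]; linarith), hd₁, hd₂,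
    abs_of_pos (by linarith), abs_of_pos (by linarith)]
  ring

theorem toReal_volume_quad (hα : 0 < α) (hβ : 0 < β) (hαβ : α + β < 1) :
    (volume (Quad α β)).toReal = 4 := by
  have h := (show IsQuadratic fun _ => 1 from ⟨1, 0, 0, 0, 0, 0, fun _ => by ring⟩).setIntegral_quad
    hα hβ hαβ
  rw [setIntegral_const, smul_eq_mul, mul_one, Measure.real_def] at h
  rw [h]
  ring

theorem isQuadratic_phi0 (α β : ℝ) : IsQuadratic (phi0 α β) :=
  ⟨3 * (4 + α ^ 2 + β ^ 2) / (2 * (α ^ 2 + β ^ 2 + 3)), 6 * β / (2 * (α ^ 2 + β ^ 2 + 3)),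
    6 * α / (2 * (α ^ 2 + β ^ 2 + 3)), -9 / (2 * (α ^ 2 + β ^ 2 + 3)), 0,
    -9 / (2 * (α ^ 2 + β ^ 2 + 3)), fun p => by rw [phi0]; ring⟩

/-- φ₀ is dual to the cell-average degree of freedom of the QLTZ element:
d₀(φ₀) = ⨍_Q φ₀ = 1 and dᵢ(φ₀) = ⨍_{eᵢ} φ₀ = 0 for i = 1, 2, 3, 4. -/
theorem phi0_dual (α β : ℝ) (hα : 0 < α) (hβ : 0 < β) (hαβ : α + β < 1) :
    quadAvg α β (phi0 α β) = 1 ∧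
    edgeAvg (a1 α β) (a2 α β) (phi0 α β) = 0 ∧
    edgeAvg (a2 α β) (a3 α β) (phi0 α β) = 0 ∧
    edgeAvg (a3 α β) (a4 α β) (phi0 α β) = 0 ∧
    edgeAvg (a4 α β) (a1 α β) (phi0 α β) = 0 := by
  simp only [quadAvg, (isQuadratic_phi0 α β).setIntegral_quad hα hβ hαβ,
    toReal_volume_quad hα hβ hαβ, (isQuadratic_phi0 α β).edgeAvg_eq]
  simp only [phi0, a1, a2, a3, a4, midpoint_eq_smul_add, invOf_eq_inv, Prod.fst_add, Prod.snd_add,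
    Prod.smul_fst, Prod.smul_snd]
  refine ⟨?_, ?_, ?_, ?_, ?_⟩ <;> field_simp <;> ring
end
end

section
/- Reproduction property of the QLTZ nodal interpolation: for every v in V := span_ℝ{1, ξ, η, ξ², η²}, one has v = (⨍_Q v)·φ₀ + Σ_{i=1}^{4} (⨍_{eᵢ} v)·φᵢ as functions on ℝ²; in particular the interpolation operator Π_Q w := (⨍_Q w)·φ₀ + Σ_{i=1}^{4} (⨍_{eᵢ} w)·φᵢ satisfies Π_Q v = v whenever v ∈ V. -/
/-!
The bilinear map `quadParam (x, y) = (x + αxy, y + βxy)` carries the square `[-1, 1]²` onto `Q`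
with Jacobian `1 + αy + βx > 0`. For `v ∈ V`, the pull-back `(1 + αy + βx) · v (quadParam (x, y))`
is a cubic polynomial in each variable separately, and `v` restricted to an edge is a quadratic in
the edge parameter. Simpson's rule is exact for cubics, so `⨍_Q v` and the four edge averages are
explicit finite combinations of point values of `v`, and the reproduction identity becomes a
polynomial identity in `α`, `β`, the coefficients of `v` and the point.
-/

open MeasureTheory

noncomputable section

/-- The QLTZ shape function space V = span_ℝ{1, ξ, η, ξ², η²}, with ξ(p) = p.2, η(p) = p.1. -/
def QLTZspace : Submodule ℝ (ℝ × ℝ → ℝ) :=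
  Submodule.span ℝ
    ({fun _ => 1, fun p => p.2, fun p => p.1, fun p => p.2 ^ 2, fun p => p.1 ^ 2} :
      Set (ℝ × ℝ → ℝ))

open Polynomial Set

def simpsonRule (f : ℝ → ℝ) (a b : ℝ) : ℝ :=
  (b - a) / 6 * (f a + 4 * f ((a + b) / 2) + f b)

def IsCubic (f : ℝ → ℝ) : Prop :=
  ∃ p : ℝ[X], p.natDegree ≤ 3 ∧ ∀ t, f t = p.eval t

namespace IsCubic

variable {f g : ℝ → ℝ}

theorem congr (hf : IsCubic f) (h : ∀ t, f t = g t) : IsCubic g := by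
  obtain ⟨p, hp, hfp⟩ := hf
  exact ⟨p, hp, fun t => (h t).symm.trans (hfp t)⟩

theorem add (hf : IsCubic f) (hg : IsCubic g) : IsCubic (fun t => f t + g t) := by
  obtain ⟨p, hp, hfp⟩ := hf
  obtain ⟨q, hq, hgq⟩ := hg
  exact ⟨p + q, (natDegree_add_le p q).trans (max_le hp hq), fun t => by simp [hfp, hgq]⟩

theorem const_mul (hf : IsCubic f) (a : ℝ) : IsCubic (fun t => a * f t) := by
  obtain ⟨p, hp, hfp⟩ := hf
  exact ⟨C a * p, (natDegree_C_mul_le a p).trans hp, fun t => by simp [hfp]⟩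

theorem integral_eq_simpson (hf : IsCubic f) (a b : ℝ) :
    ∫ t in a..b, f t = simpsonRule f a b := by
  obtain ⟨p, hp, hfp⟩ := hf
  have hsum : ∀ t, f t = ∑ i ∈ Finset.range 4, p.coeff i * t ^ i := fun t =>
    (hfp t).trans (eval_eq_sum_range' (by omega) t)
  simp only [hsum, simpsonRule]
  rw [intervalIntegral.integral_finsetSum (f := fun i t => p.coeff i * t ^ i) fun i _ =>
    (continuous_const.mul (continuous_pow i)).intervalIntegrable a b]
  simp [Finset.sum_range_succ, integral_pow]
  ring

end IsCubic

def qltzPoly (c₀ c₁ c₂ c₃ c₄ : ℝ) (p : ℝ × ℝ) : ℝ :=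
  c₀ + c₁ * p.2 + c₂ * p.1 + c₃ * p.2 ^ 2 + c₄ * p.1 ^ 2

theorem isCubic_affine_mul_qltzPoly_affine (c₀ c₁ c₂ c₃ c₄ w₀ w₁ : ℝ) (p d : ℝ × ℝ) :
    IsCubic fun t => (w₀ + w₁ * t) * qltzPoly c₀ c₁ c₂ c₃ c₄ (p + t • d) := by
  refine ⟨(C w₀ + C w₁ * X) * (C c₀ + C c₁ * (C p.2 + C d.2 * X) + C c₂ * (C p.1 + C d.1 * X)
    + C c₃ * (C p.2 + C d.2 * X) ^ 2 + C c₄ * (C p.1 + C d.1 * X) ^ 2), ?_, fun t => ?_⟩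
  · compute_degree
  · simp only [qltzPoly, eval_mul, eval_add, eval_pow, eval_C, eval_X, Prod.fst_add,
      Prod.snd_add, Prod.smul_fst, Prod.smul_snd, smul_eq_mul]
    ring

theorem edgeAvg_qltzPoly (c₀ c₁ c₂ c₃ c₄ : ℝ) (P R : ℝ × ℝ) :
    edgeAvg P R (qltzPoly c₀ c₁ c₂ c₃ c₄) =
      simpsonRule (fun t => qltzPoly c₀ c₁ c₂ c₃ c₄ ((1 - t) • P + t • R)) 0 1 := by
  have hline : ∀ t : ℝ, (1 - t) • P + t • R = P + t • (R - P) := fun t => by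
    rw [sub_smul, one_smul, smul_sub]; abel
  have h := isCubic_affine_mul_qltzPoly_affine c₀ c₁ c₂ c₃ c₄ 1 0 P (R - P)
  rw [edgeAvg]
  simpa only [zero_mul, add_zero, one_mul, ← hline] using h.integral_eq_simpson 0 1

def refSquare : Set (ℝ × ℝ) := Icc (-1) 1 ×ˢ Icc (-1) 1

/-- The bilinear map `Σᵢ Nᵢ(x, y) aᵢ` of the reference square onto `Q`, where the `Nᵢ` are the
`Q₁` shape functions `(1 ± x)(1 ± y)/4` attached to the vertices `aᵢ`. -/
def quadParam (α β : ℝ) (p : ℝ × ℝ) : ℝ × ℝ :=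
  (p.1 + α * (p.1 * p.2), p.2 + β * (p.1 * p.2))

theorem quadParam_eq_add_smul_fst (α β x y : ℝ) :
    quadParam α β (x, y) = (0, y) + x • (1 + α * y, β * y) := by
  ext <;> simp [quadParam] <;> ring

theorem quadParam_eq_add_smul_snd (α β x y : ℝ) :
    quadParam α β (x, y) = (x, 0) + y • (α * x, 1 + β * x) := by
  ext <;> simp [quadParam] <;> ring

theorem quadParam_jacobian_pos {α β : ℝ} (hα : 0 < α) (hβ : 0 < β) (hαβ : α + β < 1)
    {p : ℝ × ℝ} (hp : p ∈ refSquare) : 0 < 1 + α * p.2 + β * p.1 := by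
  obtain ⟨⟨hx₁, hx₂⟩, hy₁, hy₂⟩ := hp
  nlinarith

theorem image_quadParam_subset_quad (α β : ℝ) :
    quadParam α β '' refSquare ⊆ Quad α β := by
  rintro _ ⟨⟨x, y⟩, ⟨⟨hx₁, hx₂⟩, hy₁, hy₂⟩, rfl⟩
  set w : Fin 4 → ℝ := ![(1 - x) * (1 + y) / 4, (1 - x) * (1 - y) / 4, (1 + x) * (1 - y) / 4,
    (1 + x) * (1 + y) / 4]
  set z : Fin 4 → ℝ × ℝ := ![a1 α β, a2 α β, a3 α β, a4 α β]
  have hw₀ : ∀ i ∈ Finset.univ, 0 ≤ w i := by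
    intro i _
    fin_cases i <;> simp [w] <;> nlinarith
  have hw₁ : ∑ i, w i = 1 := by
    simp [w, Fin.sum_univ_four]; ring
  have hz : ∀ i ∈ Finset.univ, z i ∈ ({a1 α β, a2 α β, a3 α β, a4 α β} : Set (ℝ × ℝ)) := by
    intro i _; fin_cases i <;> simp [z]
  have hmem := Finset.centerMass_mem_convexHull Finset.univ hw₀ (by rw [hw₁]; norm_num) hz
  rw [Finset.centerMass_eq_of_sum_1 _ _ hw₁] at hmem
  rw [Quad]
  convert hmem using 1
  simp only [z, w, Fin.sum_univ_four, Matrix.cons_val_zero, Matrix.cons_val_one,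
    Matrix.cons_val_two, Matrix.cons_val_three, Matrix.head_cons, Matrix.tail_cons, a1, a2, a3,
    a4, Prod.smul_mk, smul_eq_mul, Prod.mk_add_mk, quadParam, Prod.mk.injEq]
  constructor <;> ring

/-- The intersection of the four closed half-planes bounded by the lines through the edges
`e₁, e₂, e₃, e₄` (in this order) and containing `Q`. -/
def quadHalfPlanes (α β : ℝ) : Set (ℝ × ℝ) :=
  {p | 0 ≤ (1 - β) * (1 + p.1) + α * p.2 ∧ 0 ≤ (1 - α) * (1 + p.2) + β * p.1 ∧
       0 ≤ (1 + β) * (1 - p.1) + α * p.2 ∧ 0 ≤ (1 + α) * (1 - p.2) + β * p.1}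

theorem quad_subset_quadHalfPlanes {α β : ℝ} (hα : 0 ≤ α) (hβ : 0 ≤ β) (hαβ : α + β ≤ 1) :
    Quad α β ⊆ quadHalfPlanes α β := by
  apply convexHull_min
  · rintro p (rfl | rfl | rfl | rfl) <;>
      refine ⟨?_, ?_, ?_, ?_⟩ <;> simp only [a1, a2, a3, a4] <;> nlinarith
  · rintro p ⟨hp₁, hp₂, hp₃, hp₄⟩ q ⟨hq₁, hq₂, hq₃, hq₄⟩ s t hs ht hst
    simp only [quadHalfPlanes, mem_ofPred_eq, Prod.fst_add, Prod.snd_add, Prod.smul_fst,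
      Prod.smul_snd, smul_eq_mul]
    refine ⟨?_, ?_, ?_, ?_⟩ <;> nlinarith [mul_nonneg hs hp₁, mul_nonneg ht hq₁,
      mul_nonneg hs hp₂, mul_nonneg ht hq₂, mul_nonneg hs hp₃, mul_nonneg ht hq₃,
      mul_nonneg hs hp₄, mul_nonneg ht hq₄]

section SmallerRoot

variable {b c : ℝ}

theorem sub_sqrt_le_of_quadratic_nonpos {M : ℝ} (h : M ^ 2 - 2 * b * M + c ≤ 0) :
    b - √(b ^ 2 - c) ≤ M := by
  rcases le_or_gt b M with hbM | hMb
  · linarith [Real.sqrt_nonneg (b ^ 2 - c)]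
  · have : b - M ≤ √(b ^ 2 - c) := Real.le_sqrt_of_sq_le (by nlinarith)
    linarith

theorem le_sub_sqrt_of_quadratic_nonneg {m : ℝ} (hm : m ≤ b) (h : 0 ≤ m ^ 2 - 2 * b * m + c) :
    m ≤ b - √(b ^ 2 - c) := by
  have : √(b ^ 2 - c) ≤ b - m := Real.sqrt_le_iff.2 ⟨by linarith, by nlinarith⟩
  linarith

theorem quadratic_sub_sqrt_eq_zero (hc : c ≤ b ^ 2) :
    (b - √(b ^ 2 - c)) ^ 2 - 2 * b * (b - √(b ^ 2 - c)) + c = 0 := by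
  have := Real.sq_sqrt (sub_nonneg.2 hc)
  linear_combination this

end SmallerRoot

/-- Solving `quadParam α β (x, y) = (u, v)` gives `x = u - s / (2β)`, `y = v - s / (2α)` with
`s = 2αβxy` a root of `s² - 2(1 + βu + αv)s + 4αβuv`; the four half-plane conditions say exactly
that the smaller root puts `(x, y)` in the square. -/
theorem quadHalfPlanes_subset_image_quadParam {α β : ℝ} (hα : 0 < α) (hβ : 0 < β) :
    quadHalfPlanes α β ⊆ quadParam α β '' refSquare := by
  rintro ⟨u, v⟩ ⟨h₁, h₂, h₃, h₄⟩
  simp only at h₁ h₂ h₃ h₄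
  set b := 1 + β * u + α * v
  set c := 4 * α * β * (u * v)
  set s := b - √(b ^ 2 - c)
  have hs₁ : s ≤ 2 * β * (1 + u) :=
    sub_sqrt_le_of_quadratic_nonpos (by nlinarith [mul_nonneg hβ.le h₁])
  have hs₂ : s ≤ 2 * α * (1 + v) :=
    sub_sqrt_le_of_quadratic_nonpos (by nlinarith [mul_nonneg hα.le h₂])
  have hs₃ : 2 * β * (u - 1) ≤ s :=
    le_sub_sqrt_of_quadratic_nonneg (by linarith) (by nlinarith [mul_nonneg hβ.le h₃])
  have hs₄ : 2 * α * (v - 1) ≤ s :=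
    le_sub_sqrt_of_quadratic_nonneg (by linarith) (by nlinarith [mul_nonneg hα.le h₄])
  have hroot : s ^ 2 - 2 * b * s + c = 0 :=
    quadratic_sub_sqrt_eq_zero
      (by nlinarith [mul_nonneg hβ.le h₁, sq_nonneg (2 * β * (1 + u) - b)])
  refine ⟨(u - s / (2 * β), v - s / (2 * α)), ⟨⟨?_, ?_⟩, ?_, ?_⟩, ?_⟩
  · rw [neg_le_sub_iff_le_add, div_le_iff₀ (by positivity)]; linarith
  · rw [sub_le_comm, le_div_iff₀ (by positivity)]; linarith
  · rw [neg_le_sub_iff_le_add, div_le_iff₀ (by positivity)]; linarith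
  · rw [sub_le_comm, le_div_iff₀ (by positivity)]; linarith
  · simp only [quadParam, Prod.mk.injEq]
    constructor <;> field_simp <;> linear_combination hroot

theorem image_quadParam_refSquare {α β : ℝ} (hα : 0 < α) (hβ : 0 < β) (hαβ : α + β < 1) :
    quadParam α β '' refSquare = Quad α β :=
  (image_quadParam_subset_quad α β).antisymm
    ((quad_subset_quadHalfPlanes hα.le hβ.le hαβ.le).trans
      (quadHalfPlanes_subset_image_quadParam hα hβ))

/-- From `quadParam p = quadParam p'` one gets `(x'y' - xy)(2 + β(x + x') + α(y + y')) = 0`,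
and the second factor is positive on the square. -/
theorem injOn_quadParam {α β : ℝ} (hα : 0 < α) (hβ : 0 < β) (hαβ : α + β < 1) :
    InjOn (quadParam α β) refSquare := by
  rintro ⟨x, y⟩ ⟨⟨hx₁, hx₂⟩, hy₁, hy₂⟩ ⟨x', y'⟩ ⟨⟨hx₁', hx₂'⟩, hy₁', hy₂'⟩ h
  simp only [quadParam, Prod.mk.injEq] at h
  obtain ⟨h₁, h₂⟩ := h
  have hfactor : (x' * y' - x * y) * (2 + β * (x + x') + α * (y + y')) = 0 := by
    linear_combination (-(y + y')) * h₁ - (x + x') * h₂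
  have hpos : 0 < 2 + β * (x + x') + α * (y + y') := by nlinarith
  have hxy : x' * y' - x * y = 0 := (mul_eq_zero.1 hfactor).resolve_right hpos.ne'
  simp only [Prod.mk.injEq]
  constructor <;> nlinarith

def quadParamFDeriv (α β : ℝ) (p : ℝ × ℝ) : ℝ × ℝ →L[ℝ] ℝ × ℝ :=
  LinearMap.toContinuousLinearMap (Matrix.toLin (Module.Basis.finTwoProd ℝ)
    (Module.Basis.finTwoProd ℝ) !![1 + α * p.2, α * p.1; β * p.2, 1 + β * p.1])

theorem hasFDerivAt_quadParam (α β : ℝ) (p : ℝ × ℝ) :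
    HasFDerivAt (quadParam α β) (quadParamFDeriv α β p) p := by
  rw [quadParamFDeriv, Matrix.toLin_finTwoProd_toContinuousLinearMap]
  have hfst := hasFDerivAt_fst (𝕜 := ℝ) (p := p)
  have hsnd := hasFDerivAt_snd (𝕜 := ℝ) (p := p)
  refine HasFDerivAt.prodMk ?_ ?_
  · exact (hfst.add ((hfst.mul hsnd).const_mul α)).congr_fderiv (by ext <;> simp)
  · exact (hsnd.add ((hfst.mul hsnd).const_mul β)).congr_fderiv (by ext <;> simp)

theorem det_quadParamFDeriv (α β : ℝ) (p : ℝ × ℝ) :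
    (quadParamFDeriv α β p).det = 1 + α * p.2 + β * p.1 := by
  simp only [quadParamFDeriv, LinearMap.det_toContinuousLinearMap, LinearMap.det_toLin,
    Matrix.det_fin_two_of]
  ring

theorem integral_quad {α β : ℝ} (hα : 0 < α) (hβ : 0 < β) (hαβ : α + β < 1)
    (f : ℝ × ℝ → ℝ) :
    ∫ p in Quad α β, f p = ∫ p in refSquare, (1 + α * p.2 + β * p.1) * f (quadParam α β p) := by
  have hmeas : MeasurableSet refSquare := measurableSet_Icc.prod measurableSet_Icc
  rw [← image_quadParam_refSquare hα hβ hαβ,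
    integral_image_eq_integral_abs_det_fderiv_smul volume hmeas
      (fun p _ => (hasFDerivAt_quadParam α β p).hasFDerivWithinAt) (injOn_quadParam hα hβ hαβ) f]
  refine setIntegral_congr_fun hmeas fun p hp => ?_
  rw [det_quadParamFDeriv, abs_of_pos (quadParam_jacobian_pos hα hβ hαβ hp), smul_eq_mul]

theorem setIntegral_Icc_prod_Icc {E : Type*} [NormedAddCommGroup E] [NormedSpace ℝ E]
    {a₁ b₁ a₂ b₂ : ℝ} (h₁ : a₁ ≤ b₁) (h₂ : a₂ ≤ b₂) {f : ℝ × ℝ → E}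
    (hf : IntegrableOn f (Icc a₁ b₁ ×ˢ Icc a₂ b₂)) :
    ∫ p in Icc a₁ b₁ ×ˢ Icc a₂ b₂, f p = ∫ x in a₁..b₁, ∫ y in a₂..b₂, f (x, y) := by
  rw [Measure.volume_eq_prod, setIntegral_prod f hf]
  simp only [intervalIntegral.integral_of_le, h₁, h₂,
    setIntegral_congr_set (Ioc_ae_eq_Icc (α := ℝ) (μ := volume))]

theorem integral_quad_qltzPoly {α β : ℝ} (hα : 0 < α) (hβ : 0 < β) (hαβ : α + β < 1)
    (c₀ c₁ c₂ c₃ c₄ : ℝ) :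
    ∫ p in Quad α β, qltzPoly c₀ c₁ c₂ c₃ c₄ p =
      simpsonRule (fun x => simpsonRule (fun y =>
        (1 + α * y + β * x) * qltzPoly c₀ c₁ c₂ c₃ c₄ (quadParam α β (x, y))) (-1) 1) (-1) 1 := by
  set g : ℝ → ℝ → ℝ := fun x y =>
    (1 + α * y + β * x) * qltzPoly c₀ c₁ c₂ c₃ c₄ (quadParam α β (x, y))
  have hcubic_x : ∀ y, IsCubic fun x => g x y := fun y =>
    (isCubic_affine_mul_qltzPoly_affine c₀ c₁ c₂ c₃ c₄ (1 + α * y) β (0, y)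
      (1 + α * y, β * y)).congr fun x => by simp only [g, quadParam_eq_add_smul_fst]
  have hcubic_y : ∀ x, IsCubic fun y => g x y := fun x =>
    (isCubic_affine_mul_qltzPoly_affine c₀ c₁ c₂ c₃ c₄ (1 + β * x) α (x, 0)
      (α * x, 1 + β * x)).congr fun y => by simp only [g, quadParam_eq_add_smul_snd]; ring
  have hcont : Continuous fun p : ℝ × ℝ => g p.1 p.2 := by
    simp only [g, qltzPoly, quadParam]; fun_prop
  rw [integral_quad hα hβ hαβ, refSquare,
    setIntegral_Icc_prod_Icc (by norm_num) (by norm_num)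
      (hcont.continuousOn.integrableOn_compact (isCompact_Icc.prod isCompact_Icc))]
  simp only [(hcubic_y _).integral_eq_simpson]
  refine IsCubic.integral_eq_simpson ?_ _ _
  exact (((hcubic_x (-1)).add ((hcubic_x ((-1 + 1) / 2)).const_mul 4)).add
    (hcubic_x 1)).const_mul ((1 - -1) / 6)

theorem quadAvg_qltzPoly {α β : ℝ} (hα : 0 < α) (hβ : 0 < β) (hαβ : α + β < 1)
    (c₀ c₁ c₂ c₃ c₄ : ℝ) :
    quadAvg α β (qltzPoly c₀ c₁ c₂ c₃ c₄) =
      simpsonRule (fun x => simpsonRule (fun y =>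
        (1 + α * y + β * x) * qltzPoly c₀ c₁ c₂ c₃ c₄ (quadParam α β (x, y))) (-1) 1) (-1) 1 /
        4 := by
  have harea : (volume (Quad α β)).toReal = 4 := by
    have hone : qltzPoly 1 0 0 0 0 = fun _ => 1 := funext fun p => by simp [qltzPoly]
    have h := integral_quad_qltzPoly hα hβ hαβ 1 0 0 0 0
    rw [hone, setIntegral_const, smul_eq_mul, mul_one, measureReal_def] at h
    rw [h]; norm_num [simpsonRule]; ring
  rw [quadAvg, harea, integral_quad_qltzPoly hα hβ hαβ]

theorem QLTZspace.exists_eq_qltzPoly {v : ℝ × ℝ → ℝ} (hv : v ∈ QLTZspace) :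
    ∃ c₀ c₁ c₂ c₃ c₄ : ℝ, v = qltzPoly c₀ c₁ c₂ c₃ c₄ := by
  simp only [QLTZspace, Submodule.mem_span_insert, Submodule.mem_span_singleton] at hv
  obtain ⟨c₀, -, ⟨c₁, -, ⟨c₂, -, ⟨c₃, -, ⟨c₄, rfl⟩, rfl⟩, rfl⟩, rfl⟩, rfl⟩ := hv
  refine ⟨c₀, c₁, c₂, c₃, c₄, funext fun p => ?_⟩
  simp only [qltzPoly, Pi.add_apply, Pi.smul_apply, smul_eq_mul]
  ring

/-- Reproduction property of the QLTZ nodal interpolation: every v in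
V = span{1, ξ, η, ξ², η²} satisfies v = (⨍_Q v)·φ₀ + Σᵢ (⨍_{eᵢ} v)·φᵢ, i.e. the
interpolation Π_Q w = (⨍_Q w)·φ₀ + Σᵢ (⨍_{eᵢ} w)·φᵢ reproduces V. -/
theorem QLTZ_interpolation_reproduces (α β : ℝ) (hα : 0 < α) (hβ : 0 < β)
    (hαβ : α + β < 1) :
    ∀ v ∈ QLTZspace, v = fun p =>
      quadAvg α β v * phi0 α β p +
      edgeAvg (a1 α β) (a2 α β) v * phi1 α β p +
      edgeAvg (a2 α β) (a3 α β) v * phi2 α β p +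
      edgeAvg (a3 α β) (a4 α β) v * phi3 α β p +
      edgeAvg (a4 α β) (a1 α β) v * phi4 α β p := by
  intro v hv
  obtain ⟨c₀, c₁, c₂, c₃, c₄, rfl⟩ := QLTZspace.exists_eq_qltzPoly hv
  funext p
  simp only [quadAvg_qltzPoly hα hβ hαβ, edgeAvg_qltzPoly, simpsonRule, qltzPoly, quadParam, a1, a2,
    a3, a4, phi0, phi1, phi2, phi3, phi4, Prod.smul_mk, Prod.mk_add_mk, smul_eq_mul]
  field_simp
  ring
end
end
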